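/- arXiv:1804.05637 — 2 statements merged into one kernel-verified Lean document; each statement's English description precedes it below -/
import Mathlib

section
/- Let S be a segment with at least four elements in a 3-connected matroid M (i.e., M|S ≅ U_{2,k} with k ≥ 4). Then for every s ∈ S, the matroid M \ s obtained by deleting s is 3-connected. -/
open Set Matroid

variable {α β : Type*}

namespace NDP

/-- The rank of a set `X` in a matroid `M`: the largest cardinality of an
independent subset of `X` (intended for finite matroids). -/
noncomputable def rk (M : Matroid α) (X : Set α) : ℕ :=
  sSup {n : ℕ | ∃ I, M.Indep I ∧ I ⊆ X ∧ I.ncard = n}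

/-- The connectivity function `λ_M(X) = r(X) + r(E − X) − r(M)`, valued in `ℤ`. -/
noncomputable def lam (M : Matroid α) (X : Set α) : ℤ :=
  (rk M X : ℤ) + (rk M (M.E \ X) : ℤ) - (rk M M.E : ℤ)

/-- Deletion of a set of elements. -/
def delete (M : Matroid α) (D : Set α) : Matroid α := M ↾ (M.E \ D)

/-- Contraction of a set of elements, defined by duality. -/
def contract (M : Matroid α) (C : Set α) : Matroid α := (delete M✶ C)✶

/-- `X` is a `k`-separating set of `M`. -/
def Separating (M : Matroid α) (k : ℕ) (X : Set α) : Prop :=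
  X ⊆ M.E ∧ lam M X ≤ (k : ℤ) - 1

/-- `X` is exactly `k`-separating in `M`. -/
def ExactlySeparating (M : Matroid α) (k : ℕ) (X : Set α) : Prop :=
  X ⊆ M.E ∧ lam M X = (k : ℤ) - 1

/-- `(X, M.E \ X)` is a `k`-separation of `M`. -/
def IsKSeparation (M : Matroid α) (k : ℕ) (X : Set α) : Prop :=
  Separating M k X ∧ k ≤ X.ncard ∧ k ≤ (M.E \ X).ncard

/-- A matroid is connected if it has no 1-separations. -/
def Connected (M : Matroid α) : Prop := ∀ X, ¬ IsKSeparation M 1 X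

/-- A matroid is 3-connected if it has no k-separations for k < 3. -/
def ThreeConnected (M : Matroid α) : Prop := ∀ k < 3, ∀ X, ¬ IsKSeparation M k X

/-- A circuit: a minimal dependent set. -/
def Circuit (M : Matroid α) (C : Set α) : Prop :=
  C ⊆ M.E ∧ ¬ M.Indep C ∧ ∀ D, D ⊂ C → M.Indep D

def Cocircuit (M : Matroid α) (C : Set α) : Prop := Circuit M✶ C

def Triangle (M : Matroid α) (T : Set α) : Prop := Circuit M T ∧ T.ncard = 3

def Triad (M : Matroid α) (T : Set α) : Prop := Cocircuit M T ∧ T.ncard = 3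

/-- `N` is a minor of `M`. -/
def Minor (N M : Matroid α) : Prop := ∃ C D, N = delete (contract M C) D

/-- `M` has a minor isomorphic to `N`. -/
def IsoMinor (M : Matroid α) (N : Matroid β) : Prop :=
  ∃ (f : β → α) (hf : Set.InjOn f N.E), Minor (N.map f hf) M

/-- `X` is a set of representatives for the simplification of `M`:
one non-loop element from each parallel class. -/
def SimpRep (M : Matroid α) (X : Set α) : Prop :=
  X ⊆ M.E ∧ (∀ e ∈ X, M.Indep {e}) ∧
  (∀ e ∈ M.E, M.Indep {e} → ∃ f ∈ X, f ∈ M.closure {e}) ∧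
  (∀ f ∈ X, ∀ g ∈ X, f ∈ M.closure {g} → f = g)

/-- `si M` (the simplification of `M`) is a 3-connected matroid. -/
def SiThreeConnected (M : Matroid α) : Prop :=
  ∀ X, SimpRep M X → ThreeConnected (M ↾ X)

/-- `co M` (the cosimplification of `M`) is a 3-connected matroid. -/
def CoThreeConnected (M : Matroid α) : Prop := SiThreeConnected M✶

/-- The restriction of `M` to `P` is isomorphic to the rank-`r` uniform matroid on `P`. -/
def UnifRestr (M : Matroid α) (r : ℕ) (P : Set α) : Prop :=
  P ⊆ M.E ∧ ∀ X ⊆ P, (M.Indep X ↔ X.ncard ≤ r)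

/-- A set is fully closed if it is closed in `M` and in `M✶`. -/
def FullClosed (M : Matroid α) (F : Set α) : Prop :=
  M.closure F = F ∧ M✶.closure F = F

/-- The full closure of `X`: the intersection of all fully closed sets containing `X`. -/
def fcl (M : Matroid α) (X : Set α) : Set α :=
  ⋂₀ {F | X ⊆ F ∧ FullClosed M F}

/-- `(X, {z}, Y)` is a vertical 3-separation of `M`. -/
def VertThreeSep (M : Matroid α) (X : Set α) (z : α) (Y : Set α) : Prop :=
  X ∪ {z} ∪ Y = M.E ∧ Disjoint X Y ∧ z ∉ X ∧ z ∉ Y ∧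
  IsKSeparation M 3 (X ∪ {z}) ∧ 3 ≤ rk M (X ∪ {z}) ∧ 3 ≤ rk M Y ∧
  IsKSeparation M 3 X ∧ 3 ≤ rk M X ∧ 3 ≤ rk M (Y ∪ {z}) ∧
  z ∈ M.closure X ∧ z ∈ M.closure Y

/-- `M` is a wheel or a whirl: its ground set has a cyclic ordering of alternating
spokes and rims in which consecutive triples are alternately triangles and triads. -/
def IsWheelOrWhirl (M : Matroid α) : Prop :=
  ∃ (n : ℕ) (s r : ZMod n → α), 2 ≤ n ∧
    Function.Injective (fun p : ZMod n × Bool => if p.2 then s p.1 else r p.1) ∧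
    Set.range s ∪ Set.range r = M.E ∧
    ∀ i : ZMod n, Triangle M {s i, r i, s (i + 1)} ∧ Triad M {r i, s (i + 1), r (i + 1)}

/-- `f` (restricted to `{0, …, k−1}`) is a fan ordering of length `k` in `M`. -/
def IsFanOrd (M : Matroid α) (k : ℕ) (f : ℕ → α) : Prop :=
  3 ≤ k ∧ Set.InjOn f (Set.Iio k) ∧ (∀ i < k, f i ∈ M.E) ∧
  (Triangle M {f 0, f 1, f 2} ∨ Triad M {f 0, f 1, f 2}) ∧
  ∀ i, i + 3 < k →
    (Triangle M {f i, f (i+1), f (i+2)} → Triad M {f (i+1), f (i+2), f (i+3)}) ∧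
    (Triad M {f i, f (i+1), f (i+2)} → Triangle M {f (i+1), f (i+2), f (i+3)})

/-- `F` is a fan of `M`. -/
def IsFan (M : Matroid α) (F : Set α) : Prop :=
  ∃ k f, IsFanOrd M k f ∧ F = f '' Set.Iio k

/-- `F` is a maximal fan of `M`. -/
def IsMaximalFan (M : Matroid α) (F : Set α) : Prop :=
  IsFan M F ∧ ∀ F', IsFan M F' → F ⊆ F' → F' = F

end NDP

/-! Let `(X, Y)` be a `k`-separation of `M \ s` with `k ≤ 2`. The line `S \ {s}` has at least
three points, so one side, say `X`, contains two of them, and these span `s`. Adding `s` to `X`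
then changes neither `r(X)` nor `r(M)`, so `(X ∪ {s}, Y)` is a `k`-separation of `M`. -/

namespace NDP

variable {M : Matroid α} {X R S T : Set α} {e : α} {k : ℕ}

lemma rk_restrict (hXR : X ⊆ R) : rk (M ↾ R) X = rk M X := by
  unfold rk
  congr 1
  ext n
  constructor
  · rintro ⟨I, hI, hIX, rfl⟩
    exact ⟨I, (restrict_indep_iff.1 hI).1, hIX, rfl⟩
  · rintro ⟨I, hI, hIX, rfl⟩
    exact ⟨I, restrict_indep_iff.2 ⟨hI, hIX.trans hXR⟩, hIX, rfl⟩

lemma cast_rk_eq_eRk [M.RankFinite] (X : Set α) : (rk M X : ℕ∞) = M.eRk X := by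
  obtain ⟨I, hI⟩ := M.exists_isBasis' X
  have hbound : ∀ n ∈ {n : ℕ | ∃ J, M.Indep J ∧ J ⊆ X ∧ J.ncard = n}, n ≤ I.ncard := by
    rintro n ⟨J, hJ, hJX, rfl⟩
    have hle := hJ.encard_le_eRk_of_subset hJX
    rw [← hI.encard_eq_eRk, ← hJ.finite.cast_ncard_eq, ← hI.indep.finite.cast_ncard_eq] at hle
    exact_mod_cast hle
  suffices rk M X = I.ncard by
    rw [this, hI.indep.finite.cast_ncard_eq, hI.encard_eq_eRk]
  exact le_antisymm (csSup_le ⟨0, ∅, M.empty_indep, empty_subset _, ncard_empty _⟩ hbound)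
    (le_csSup ⟨I.ncard, hbound⟩ ⟨I, hI.indep, hI.subset, rfl⟩)

lemma rk_insert_of_mem_closure [M.RankFinite] (he : e ∈ M.closure X) :
    rk M (insert e X) = rk M X := by
  rw [← Nat.cast_inj (R := ℕ∞), cast_rk_eq_eRk, cast_rk_eq_eRk, ← eRk_insert_closure_eq,
    insert_eq_of_mem he, eRk_closure_eq]

lemma lam_delete_singleton_eq_lam_insert [M.RankFinite] (hX : X ⊆ M.E \ {e})
    (he : e ∈ M.closure X) : lam (delete M {e}) X = lam M (insert e X) := by
  have heE : e ∈ M.closure (M.E \ {e}) := M.closure_subset_closure hX he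
  have hrk : rk M (M.E \ {e}) = rk M M.E := by
    rw [← rk_insert_of_mem_closure heE, insert_sdiff_singleton,
      insert_eq_of_mem (M.closure_subset_ground _ heE)]
  simp only [lam, delete, restrict_ground_eq]
  rw [rk_restrict hX, rk_restrict sdiff_subset, rk_restrict subset_rfl, hrk,
    rk_insert_of_mem_closure he, sdiff_sdiff, singleton_union]

lemma lam_compl {N : Matroid α} (hX : X ⊆ N.E) : lam N (N.E \ X) = lam N X := by
  rw [lam, lam, sdiff_sdiff_cancel_left hX, add_comm]

lemma IsKSeparation.compl {N : Matroid α} (h : IsKSeparation N k X) :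
    IsKSeparation N k (N.E \ X) := by
  obtain ⟨⟨hXE, hlam⟩, hX, hY⟩ := h
  exact ⟨⟨sdiff_subset, (lam_compl hXE).symm ▸ hlam⟩, hY,
    (sdiff_sdiff_cancel_left hXE).symm ▸ hX⟩

lemma IsKSeparation.insert_of_delete_singleton [M.RankFinite]
    (h : IsKSeparation (delete M {e}) k X) (he : e ∈ M.closure X) :
    IsKSeparation M k (insert e X) := by
  obtain ⟨⟨hXE, hlam⟩, hX, hY⟩ := h
  have hcompl : M.E \ insert e X = (M.E \ {e}) \ X := by rw [sdiff_sdiff, singleton_union]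
  refine ⟨⟨insert_subset (M.closure_subset_ground _ he) (hXE.trans sdiff_subset), ?_⟩,
    hX.trans (ncard_le_ncard_insert _ _), hcompl ▸ hY⟩
  rwa [← lam_delete_singleton_eq_lam_insert hXE he]

lemma UnifRestr.mem_closure_of_two_le_ncard (hS : UnifRestr M 2 S) (he : e ∈ S)
    (hT : T ⊆ S \ {e}) (hT2 : 2 ≤ T.ncard) : e ∈ M.closure T := by
  obtain ⟨a, b, ha, hb, hab⟩ := (one_lt_ncard_iff (finite_of_ncard_pos (by omega))).1 hT2
  have haS := (hT ha).1
  have hbS := (hT hb).1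
  have heab : e ∉ ({a, b} : Set α) := by
    rintro (rfl | rfl)
    exacts [(hT ha).2 rfl, (hT hb).2 rfl]
  have hab_indep : M.Indep {a, b} := by
    rw [hS.2 _ (pair_subset haS hbS), ncard_pair hab]
  refine M.closure_subset_closure (pair_subset ha hb)
    ((hab_indep.mem_closure_iff_of_notMem heab).2 (dep_iff.2 ⟨fun hind ↦ ?_,
      insert_subset (hS.1 he) hab_indep.subset_ground⟩))
  have hcard := (hS.2 _ (insert_subset he (pair_subset haS hbS))).1 hind
  rw [ncard_insert_of_notMem heab, ncard_pair hab] at hcard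
  omega

lemma two_le_ncard_inter_or_two_le_ncard_sdiff (hT : 3 ≤ T.ncard) (X : Set α) :
    2 ≤ (T ∩ X).ncard ∨ 2 ≤ (T \ X).ncard := by
  have := ncard_inter_add_ncard_sdiff_eq_ncard T X (finite_of_ncard_pos (by omega))
  omega

end NDP

/-- Deleting any element of a segment with at least four elements
in a 3-connected matroid preserves 3-connectedness. -/
theorem stmt8 (M : Matroid α) [M.Finite] (hM : NDP.ThreeConnected M)
    (S : Set α) (hS : NDP.UnifRestr M 2 S) (hcard : 4 ≤ S.ncard)
    (s : α) (hs : s ∈ S) :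
    NDP.ThreeConnected (NDP.delete M {s}) := by
  intro k hk X hX
  have hS3 : 3 ≤ (S \ {s}).ncard := by
    rw [ncard_sdiff_singleton_of_mem hs]
    omega
  rcases NDP.two_le_ncard_inter_or_two_le_ncard_sdiff hS3 X with hX2 | hY2
  · have hsX := hS.mem_closure_of_two_le_ncard hs inter_subset_left hX2
    exact hM k hk _ (hX.insert_of_delete_singleton
      (M.closure_subset_closure inter_subset_right hsX))
  · have hsY := hS.mem_closure_of_two_le_ncard hs sdiff_subset hY2
    exact hM k hk _ (hX.compl.insert_of_delete_singleton
      (M.closure_subset_closure (sdiff_subset_sdiff_left (sdiff_subset_sdiff_left hS.1)) hsY))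
end

section
/- Let (X, Y) be a 2-separation in a connected matroid M with no series or parallel pairs. Then (fcl(X), Y − fcl(X)) is also a 2-separation of M, where fcl denotes the full closure operator. -/
open Set Matroid

variable {α β : Type*}

/-! If every pair of elements is independent in both `M` and `M✶`, a set `Z` with `λ(Z) ≤ 1`
gains at most one element on closing it (two new elements would be an independent pair in
`cl Z ∩ cl (E - Z)`, whose rank is at most `λ(Z)`), and `E - Z` cannot be a pair (such a pair
has `λ = 2`). So closing or coclosing one side of a 2-separation gives another 2-separation, and a
maximal such side between `X` and `fcl X` is fully closed, hence equal to `fcl X`. Connectivity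
excludes loops and coloops, which together with the absence of parallel and series pairs makes
every pair independent in `M` and in `M✶`. -/

namespace NDP

variable {M : Matroid α} {X Y Z I F : Set α} {e : α} {k : ℕ}

/-- No loops (the case `a = b`) and no parallel pairs. -/
def Simple (M : Matroid α) : Prop := ∀ a ∈ M.E, ∀ b ∈ M.E, M.Indep {a, b}

lemma lam_compl_s10 (hX : X ⊆ M.E) : lam M (M.E \ X) = lam M X := by
  unfold lam
  rw [sdiff_sdiff_cancel_left hX]
  ring

lemma subset_fcl (M : Matroid α) (X : Set α) : X ⊆ fcl M X :=
  subset_sInter fun _ hF => hF.1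

lemma fcl_subset_of_fullClosed (hXF : X ⊆ F) (hF : FullClosed M F) : fcl M X ⊆ F :=
  sInter_subset_of_mem ⟨hXF, hF⟩

lemma closure_subset_fcl (hZ : Z ⊆ fcl M X) : M.closure Z ⊆ fcl M X :=
  subset_sInter fun _ hF =>
    (M.closure_subset_closure (hZ.trans (sInter_subset_of_mem hF))).trans hF.2.1.subset

lemma fullClosed_dual_iff : FullClosed M✶ F ↔ FullClosed M F := by
  rw [FullClosed, FullClosed, dual_dual, and_comm]

lemma fcl_dual (M : Matroid α) (X : Set α) : fcl M✶ X = fcl M X := by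
  simp only [fcl, fullClosed_dual_iff]

lemma cast_rk (M : Matroid α) [M.Finite] (X : Set α) : (rk M X : ℕ∞) = M.eRk X := by
  obtain ⟨I, hI⟩ := M.exists_isBasis' X
  have hIfin : I.Finite := M.set_finite I hI.indep.subset_ground
  have hmax : IsGreatest {n : ℕ | ∃ J, M.Indep J ∧ J ⊆ X ∧ J.ncard = n} I.ncard := by
    refine ⟨⟨I, hI.indep, hI.subset, rfl⟩, ?_⟩
    rintro _ ⟨J, hJ, hJX, rfl⟩
    have hJI := (hJ.encard_le_eRk_of_subset hJX).trans_eq hI.eRk_eq_encard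
    rw [← (M.set_finite J hJ.subset_ground).cast_ncard_eq, ← hIfin.cast_ncard_eq] at hJI
    exact_mod_cast hJI
  rw [rk, hmax.csSup_eq, hIfin.cast_ncard_eq, hI.eRk_eq_encard]

variable [M.Finite]

lemma rk_mono (h : X ⊆ Y) : rk M X ≤ rk M Y := by
  have h' := M.eRk_mono h
  rw [← cast_rk, ← cast_rk] at h'
  exact_mod_cast h'

lemma rk_closure (X : Set α) : rk M (M.closure X) = rk M X := by
  have h := M.eRk_closure_eq X
  rw [← cast_rk, ← cast_rk] at h
  exact_mod_cast h

lemma rk_inter_add_rk_union_le (X Y : Set α) :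
    rk M (X ∩ Y) + rk M (X ∪ Y) ≤ rk M X + rk M Y := by
  have h := M.eRk_inter_add_eRk_union_le X Y
  rw [← cast_rk, ← cast_rk, ← cast_rk, ← cast_rk] at h
  exact_mod_cast h

lemma rk_le_ncard (hX : X.Finite) : rk M X ≤ X.ncard := by
  have h := M.eRk_le_encard X
  rw [← cast_rk, ← hX.cast_ncard_eq] at h
  exact_mod_cast h

lemma indep_iff_rk_eq_ncard (hI : I.Finite) : M.Indep I ↔ rk M I = I.ncard := by
  rw [indep_iff_eRk_eq_encard_of_finite hI, ← cast_rk, ← hI.cast_ncard_eq, Nat.cast_inj]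

lemma rk_dual_add_rk_ground (hX : X ⊆ M.E) :
    rk M✶ X + rk M M.E = rk M (M.E \ X) + X.ncard := by
  have h := M.eRk_dual_add_eRank X hX
  rw [← eRk_ground, ← cast_rk, ← cast_rk, ← cast_rk,
    ← (M.ground_finite.subset hX).cast_ncard_eq] at h
  exact_mod_cast h

lemma lam_eq_rk_add_rk_dual_sub_ncard (hX : X ⊆ M.E) :
    lam M X = rk M X + rk M✶ X - X.ncard := by
  have h := rk_dual_add_rk_ground hX
  unfold lam
  omega

lemma lam_dual (hX : X ⊆ M.E) : lam M✶ X = lam M X := by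
  rw [lam_eq_rk_add_rk_dual_sub_ncard (M := M✶) hX, lam_eq_rk_add_rk_dual_sub_ncard hX,
    dual_dual]
  ring

lemma lam_closure_le (hX : X ⊆ M.E) : lam M (M.closure X) ≤ lam M X := by
  have h : rk M (M.E \ M.closure X) ≤ rk M (M.E \ X) :=
    rk_mono (sdiff_subset_sdiff_right (M.subset_closure X hX))
  unfold lam
  rw [rk_closure]
  omega

lemma lam_eq_ncard_of_indep_of_dual_indep (hI : M.Indep I) (hI' : M✶.Indep I) :
    lam M I = I.ncard := by
  have hIfin : I.Finite := M.set_finite I hI.subset_ground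
  rw [lam_eq_rk_add_rk_dual_sub_ncard hI.subset_ground,
    (indep_iff_rk_eq_ncard hIfin).1 hI, (indep_iff_rk_eq_ncard hIfin).1 hI']
  ring

lemma isKSeparation_dual_iff : IsKSeparation M✶ k X ↔ IsKSeparation M k X := by
  by_cases hX : X ⊆ M.E
  · simp only [IsKSeparation, Separating, dual_ground, lam_dual hX]
  · simp only [IsKSeparation, Separating, dual_ground, hX, false_and]

lemma Connected.dual (h : Connected M) : Connected M✶ :=
  fun X hX => h X (isKSeparation_dual_iff.1 hX)

lemma closure_diff_subsingleton (hM : Simple M) (hZ : Z ⊆ M.E) (hlam : lam M Z ≤ 1) :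
    (M.closure Z \ Z).Subsingleton := by
  intro a ha b hb
  by_contra hab
  have haE := M.closure_subset_ground Z ha.1
  have hbE := M.closure_subset_ground Z hb.1
  have hguts : ({a, b} : Set α) ⊆ M.closure Z ∩ M.closure (M.E \ Z) := by
    rw [insert_subset_iff, singleton_subset_iff]
    exact ⟨⟨ha.1, M.subset_closure _ sdiff_subset ⟨haE, ha.2⟩⟩,
      ⟨hb.1, M.subset_closure _ sdiff_subset ⟨hbE, hb.2⟩⟩⟩
  have hspan : M.E ⊆ M.closure Z ∪ M.closure (M.E \ Z) := fun x hx => by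
    by_cases hxZ : x ∈ Z
    · exact Or.inl (M.subset_closure Z hZ hxZ)
    · exact Or.inr (M.subset_closure _ sdiff_subset ⟨hx, hxZ⟩)
  have hpair : rk M {a, b} = 2 := by
    rw [← ncard_pair hab, ← indep_iff_rk_eq_ncard (toFinite _)]
    exact hM a haE b hbE
  have h1 := rk_mono (M := M) hguts
  have h2 := rk_mono (M := M) hspan
  have h3 := rk_inter_add_rk_union_le (M := M) (M.closure Z) (M.closure (M.E \ Z))
  rw [rk_closure, rk_closure] at h3
  unfold lam at hlam
  omega

lemma ncard_compl_ne_two (hM : Simple M) (hM' : Simple M✶) (hZ : Z ⊆ M.E)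
    (hlam : lam M Z ≤ 1) : (M.E \ Z).ncard ≠ 2 := by
  intro h
  obtain ⟨a, b, hab, hcompl⟩ := ncard_eq_two.1 h
  have hpairE : ({a, b} : Set α) ⊆ M.E := hcompl ▸ sdiff_subset
  have haE : a ∈ M.E := hpairE (mem_insert a {b})
  have hbE : b ∈ M.E := hpairE (mem_insert_of_mem a rfl)
  have hlam2 := lam_eq_ncard_of_indep_of_dual_indep (hM a haE b hbE) (hM' a haE b hbE)
  rw [← hcompl, lam_compl_s10 hZ, h] at hlam2
  omega

lemma IsKSeparation.closure (hM : Simple M) (hM' : Simple M✶) (h : IsKSeparation M 2 Z) :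
    IsKSeparation M 2 (M.closure Z) := by
  obtain ⟨⟨hZ, hlam⟩, hZ2, hcompl2⟩ := h
  have hZcl := M.subset_closure Z hZ
  have hEfin := M.ground_finite
  have hsplit : (M.E \ Z) \ (M.closure Z \ Z) = M.E \ M.closure Z := by
    have := M.closure_subset_ground Z
    ext x; simp only [mem_sdiff]; tauto
  have hcount := ncard_sdiff_add_ncard_of_subset (s := M.closure Z \ Z) (t := M.E \ Z)
    (sdiff_subset_sdiff_left (M.closure_subset_ground Z)) hEfin.sdiff
  have hgain : (M.closure Z \ Z).ncard ≤ 1 :=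
    have hsub := closure_diff_subsingleton hM hZ (by omega)
    (ncard_le_one hsub.finite).2 fun _ ha _ hb => hsub ha hb
  have hne := ncard_compl_ne_two hM hM' hZ (by omega)
  rw [hsplit] at hcount
  exact ⟨⟨M.closure_subset_ground Z, (lam_closure_le hZ).trans hlam⟩,
    hZ2.trans (ncard_le_ncard hZcl (hEfin.subset (M.closure_subset_ground Z))), by omega⟩

lemma IsKSeparation.dual_closure (hM : Simple M) (hM' : Simple M✶)
    (h : IsKSeparation M 2 Z) : IsKSeparation M 2 (M✶.closure Z) := by
  rw [← isKSeparation_dual_iff] at h ⊢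
  exact h.closure hM' (by rwa [dual_dual])

lemma Connected.indep_singleton (h : Connected M) (hE : M.E.Nontrivial)
    (he : e ∈ M.E) : M.Indep {e} := by
  have heE : {e} ⊆ M.E := singleton_subset_iff.2 he
  have hcompl : 1 ≤ (M.E \ {e}).ncard := by
    obtain ⟨f, hf, hfe⟩ := hE.exists_ne e
    exact (ncard_pos M.ground_finite.sdiff).2 ⟨f, hf, hfe⟩
  have hlam : 1 ≤ lam M {e} := by
    by_contra hlt
    exact h {e} ⟨⟨heE, by push_cast; omega⟩, by rw [ncard_singleton], hcompl⟩
  have hrk := rk_le_ncard (M := M) (finite_singleton e)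
  have hrk' := rk_le_ncard (M := M✶) (finite_singleton e)
  rw [lam_eq_rk_add_rk_dual_sub_ncard heE] at hlam
  rw [indep_iff_rk_eq_ncard (finite_singleton e), ncard_singleton]
  rw [ncard_singleton] at hlam hrk hrk'
  omega

lemma Connected.simple (h : Connected M) (hE : M.E.Nontrivial)
    (hpar : ¬ ∃ C, Circuit M C ∧ C.ncard = 2) : Simple M := by
  intro a ha b hb
  obtain rfl | hab := eq_or_ne a b
  · rw [pair_eq_singleton]
    exact h.indep_singleton hE ha
  by_contra hdep
  refine hpar ⟨{a, b}, ⟨pair_subset ha hb, hdep, fun D hD => ?_⟩, ncard_pair hab⟩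
  obtain rfl | rfl | rfl | rfl := subset_pair_iff_eq.1 hD.subset
  · exact M.empty_indep
  · exact h.indep_singleton hE ha
  · exact h.indep_singleton hE hb
  · exact absurd rfl hD.ne

lemma IsKSeparation.fcl (hM : Simple M) (hM' : Simple M✶)
    (hX : IsKSeparation M 2 X) : IsKSeparation M 2 (fcl M X) := by
  let S := {Z | X ⊆ Z ∧ Z ⊆ NDP.fcl M X ∧ IsKSeparation M 2 Z}
  have hS : S.Finite := M.ground_finite.finite_subsets.subset fun Z hZ => hZ.2.2.1.1
  obtain ⟨Z, hZ⟩ := hS.exists_maximal ⟨X, subset_rfl, subset_fcl M X, hX⟩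
  obtain ⟨hXZ, hZfcl, hZsep⟩ := hZ.prop
  have hZE : Z ⊆ M.E := hZsep.1.1
  have hcl : M.closure Z = Z := Eq.symm <| hZ.eq_of_subset
    ⟨hXZ.trans (M.subset_closure Z hZE), closure_subset_fcl hZfcl, hZsep.closure hM hM'⟩
    (M.subset_closure Z hZE)
  have hcl' : M✶.closure Z = Z := Eq.symm <| hZ.eq_of_subset
    ⟨hXZ.trans (M✶.subset_closure Z hZE),
      fcl_dual M X ▸ closure_subset_fcl (fcl_dual M X ▸ hZfcl), hZsep.dual_closure hM hM'⟩
    (M✶.subset_closure Z hZE)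
  rwa [(fcl_subset_of_fullClosed hXZ ⟨hcl, hcl'⟩).antisymm hZfcl]

end NDP

/-- In a connected matroid with no series or parallel pairs, the full
closure of one side of a 2-separation gives another 2-separation. -/
theorem stmt10 (M : Matroid α) [M.Finite] (hconn : NDP.Connected M)
    (hpar : ¬ ∃ C, NDP.Circuit M C ∧ C.ncard = 2)
    (hser : ¬ ∃ C, NDP.Cocircuit M C ∧ C.ncard = 2)
    (X Y : Set α) (hsep : NDP.IsKSeparation M 2 X) (hY : Y = M.E \ X) :
    NDP.IsKSeparation M 2 (NDP.fcl M X) ∧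
      M.E \ NDP.fcl M X = Y \ NDP.fcl M X := by
  have hE : M.E.Nontrivial :=
    (one_lt_ncard_iff_nontrivial_and_finite.1 hsep.2.1).1.mono hsep.1.1
  refine ⟨hsep.fcl (hconn.simple hE hpar) (hconn.dual.simple hE hser), ?_⟩
  rw [hY, sdiff_sdiff, union_eq_self_of_subset_left (NDP.subset_fcl M X)]
end
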